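/- arXiv:2111.14280 — 5 statements merged into one kernel-verified Lean document; each statement's English description precedes it below -/
import Mathlib

section
/- A convex body K in ℂⁿ is complex-symmetric (i.e., there exists x₀ such that ξ(K - x₀) = K - x₀ for all unit complex numbers ξ) if and only if for every unit complex number ξ, the set ξ·K is a translate of K. -/
open scoped Pointwise

/-- A convex body in ℂⁿ: compact, convex, with nonempty interior. -/
def IsConvexBody {n : ℕ} (K : Set (EuclideanSpace ℂ (Fin n))) : Prop :=
  IsCompact K ∧ Convex ℝ K ∧ (interior K).Nonempty

/-- `A` is complex-symmetric with center `x₀`. -/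
def IsComplexSymmetricWithCenter {n : ℕ} (A : Set (EuclideanSpace ℂ (Fin n)))
    (x₀ : EuclideanSpace ℂ (Fin n)) : Prop :=
  ∀ ξ : ℂ, ‖ξ‖ = 1 → ξ • ((· - x₀) '' A) = (· - x₀) '' A

/-- If a nonempty bounded set is invariant under translation by `a`, then `a = 0`. -/
lemma aux_translate_self_eq_zero {E : Type*} [NormedAddCommGroup E] [NormedSpace ℝ E]
    (K : Set E) (hne : K.Nonempty) (hb : Bornology.IsBounded K)
    (a : E) (h : (a + ·) '' K = K) : a = 0 := by
  obtain ⟨x, hx⟩ := hne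
  obtain ⟨R, hR⟩ := hb.exists_norm_le
  have key : ∀ m : ℕ, x + m • a ∈ K := by
    intro m
    induction m with
    | zero => simpa using hx
    | succ m ih =>
      have hmem : a + (x + m • a) ∈ (a + ·) '' K := ⟨x + m • a, ih, rfl⟩
      rw [h] at hmem
      have heq : a + (x + m • a) = x + (m + 1) • a := by
        rw [succ_nsmul]; abel
      rwa [heq] at hmem
  have hbound : ∀ m : ℕ, (m : ℝ) * ‖a‖ ≤ R + ‖x‖ := by
    intro m
    have h1 : ‖x + m • a‖ ≤ R := hR _ (key m)
    have hcast : (m : ℝ) • a = m • a := Nat.cast_smul_eq_nsmul ℝ m a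
    have h2 : ‖m • a‖ ≤ ‖x + m • a‖ + ‖x‖ := by
      calc ‖m • a‖ = ‖(x + m • a) - x‖ := by rw [add_sub_cancel_left]
        _ ≤ ‖x + m • a‖ + ‖x‖ := norm_sub_le _ _
    have h3 : ‖m • a‖ = (m : ℝ) * ‖a‖ := by
      rw [← hcast, norm_smul]; simp
    rw [h3] at h2
    linarith
  by_contra ha
  have hpos : 0 < ‖a‖ := norm_pos_iff.mpr ha
  obtain ⟨m, hm⟩ := exists_nat_gt ((R + ‖x‖) / ‖a‖)
  have := hbound m
  rw [div_lt_iff₀ hpos] at hm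
  linarith

/-- Uniqueness of translations of a nonempty bounded set. -/
lemma aux_translate_unique {E : Type*} [NormedAddCommGroup E] [NormedSpace ℝ E]
    (K : Set E) (hne : K.Nonempty) (hb : Bornology.IsBounded K)
    (a b : E) (h : (a + ·) '' K = (b + ·) '' K) : a = b := by
  have h2 : ((-b + a) + ·) '' K = K := by
    have := congrArg (Set.image ((-b) + ·)) h
    rw [Set.image_image, Set.image_image] at this
    simpa [add_assoc] using this
  have h0 := aux_translate_self_eq_zero K hne hb _ h2
  have : a - b = 0 := by rw [sub_eq_neg_add]; exact h0
  exact sub_eq_zero.mp this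

/-- Translation bookkeeping: `ξ • (K - x₀) = K - x₀` iff `ξ • K` is the translate of `K`
by `ξ • x₀ - x₀`. -/
lemma aux_center_iff {E : Type*} [NormedAddCommGroup E] [Module ℂ E]
    (K : Set E) (x₀ : E) (ξ : ℂ) :
    ξ • ((· - x₀) '' K) = (· - x₀) '' K ↔ ξ • K = ((ξ • x₀ - x₀) + ·) '' K := by
  constructor
  · intro h
    ext z
    simp only [Set.mem_smul_set, Set.mem_image]
    constructor
    · rintro ⟨y, hy, rfl⟩
      have hmem : ξ • (y - x₀) ∈ ξ • ((· - x₀) '' K) := ⟨y - x₀, ⟨y, hy, rfl⟩, rfl⟩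
      rw [h] at hmem
      obtain ⟨w, hw, hweq⟩ := hmem
      have hweq' : w - x₀ = ξ • (y - x₀) := hweq
      refine ⟨w, hw, ?_⟩
      have hw' : w = ξ • (y - x₀) + x₀ := eq_add_of_sub_eq hweq'
      rw [hw', smul_sub]
      module
    · rintro ⟨w, hw, rfl⟩
      have hmem : w - x₀ ∈ ξ • ((· - x₀) '' K) := by
        rw [h]; exact ⟨w, hw, rfl⟩
      obtain ⟨u, ⟨v, hv, rfl⟩, huv⟩ := hmem
      have huv' : ξ • (v - x₀) = w - x₀ := huv
      refine ⟨v, hv, ?_⟩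
      have hw' : w = ξ • (v - x₀) + x₀ := (eq_add_of_sub_eq huv'.symm)
      rw [hw', smul_sub]
      module
  · intro h
    ext z
    simp only [Set.mem_smul_set, Set.mem_image]
    constructor
    · rintro ⟨u, ⟨y, hy, rfl⟩, rfl⟩
      have hmem : ξ • y ∈ ξ • K := ⟨y, hy, rfl⟩
      rw [h] at hmem
      obtain ⟨w, hw, hweq⟩ := hmem
      have hweq' : ξ • x₀ - x₀ + w = ξ • y := hweq
      refine ⟨w, hw, ?_⟩
      rw [smul_sub, ← hweq']
      module
    · rintro ⟨y, hy, rfl⟩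
      have hmem : ξ • x₀ - x₀ + y ∈ ξ • K := by
        rw [h]; exact ⟨y, hy, rfl⟩
      obtain ⟨u, hu, huv⟩ := hmem
      have huv' : ξ • u = ξ • x₀ - x₀ + y := huv
      refine ⟨u - x₀, ⟨u, hu, rfl⟩, ?_⟩
      rw [smul_sub, huv']
      module

theorem stmt0 {n : ℕ} (K : Set (EuclideanSpace ℂ (Fin n))) (hK : IsConvexBody K) :
    (∃ x₀ : EuclideanSpace ℂ (Fin n), IsComplexSymmetricWithCenter K x₀) ↔
      (∀ ξ : ℂ, ‖ξ‖ = 1 → ∃ c : EuclideanSpace ℂ (Fin n), ξ • K = (c + ·) '' K) := by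
  obtain ⟨hcomp, -, hint⟩ := hK
  have hne : K.Nonempty := hint.mono interior_subset
  have hb : Bornology.IsBounded K := hcomp.isBounded
  constructor
  · rintro ⟨x₀, hx₀⟩ ξ hξ
    exact ⟨ξ • x₀ - x₀, (aux_center_iff K x₀ ξ).mp (hx₀ ξ hξ)⟩
  · intro h
    -- choice of translation vectors
    choose c hc using h
    -- cocycle identity
    have cocycle : ∀ ξ η : ℂ, ∀ hξ : ‖ξ‖ = 1, ∀ hη : ‖η‖ = 1,
        c (ξ * η) (by rw [norm_mul, hξ, hη, one_mul]) = ξ • c η hη + c ξ hξ := by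
      intro ξ η hξ hη
      have hξη : ‖ξ * η‖ = 1 := by rw [norm_mul, hξ, hη, one_mul]
      apply aux_translate_unique K hne hb
      rw [← hc (ξ * η) hξη]
      have h1 : (ξ * η) • K = ξ • (η • K) := by rw [smul_smul]
      rw [h1, hc η hη]
      ext z
      simp only [Set.mem_smul_set, Set.mem_image]
      constructor
      · rintro ⟨u, ⟨y, hy, rfl⟩, rfl⟩
        have hmem : ξ • y ∈ ξ • K := ⟨y, hy, rfl⟩
        rw [hc ξ hξ] at hmem
        obtain ⟨w, hw, hweq⟩ := hmem
        have hweq' : c ξ hξ + w = ξ • y := hweq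
        refine ⟨w, hw, ?_⟩
        rw [smul_add, ← hweq']
        module
      · rintro ⟨w, hw, rfl⟩
        have hmem : c ξ hξ + w ∈ ξ • K := by
          rw [hc ξ hξ]; exact ⟨w, hw, rfl⟩
        obtain ⟨u, hu, huv⟩ := hmem
        have huv' : ξ • u = c ξ hξ + w := huv
        refine ⟨c η hη + u, ⟨u, hu, rfl⟩, ?_⟩
        rw [smul_add, huv']
        module
    have hI : ‖(Complex.I : ℂ)‖ = 1 := by simp
    set cI := c Complex.I hI with hcI
    refine ⟨(Complex.I - 1)⁻¹ • cI, ?_⟩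
    intro ξ hξ
    rw [aux_center_iff]
    have hξI : ‖ξ * Complex.I‖ = 1 := by rw [norm_mul, hξ, hI, one_mul]
    have hIξ : ‖Complex.I * ξ‖ = 1 := by rw [norm_mul, hI, hξ, one_mul]
    have h1 := cocycle ξ Complex.I hξ hI
    have h2 := cocycle Complex.I ξ hI hξ
    have e1 : (ξ * Complex.I) • K = ((ξ • cI + c ξ hξ) + ·) '' K := by
      rw [hc (ξ * Complex.I) hξI]
      exact congrArg (fun v => (v + ·) '' K) h1
    have e2 : (Complex.I * ξ) • K = ((Complex.I • c ξ hξ + cI) + ·) '' K := by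
      rw [hc (Complex.I * ξ) hIξ]
      exact congrArg (fun v => (v + ·) '' K) h2
    have h3 : ξ • cI + c ξ hξ = Complex.I • c ξ hξ + cI := by
      apply aux_translate_unique K hne hb
      rw [← e1, ← e2, mul_comm]
    have hne1 : (Complex.I - 1 : ℂ) ≠ 0 := by
      apply sub_ne_zero.mpr
      intro habs
      simpa using congrArg Complex.im habs
    have h4 : (Complex.I - 1) • c ξ hξ = (ξ - 1) • cI := by
      rw [sub_smul, sub_smul, one_smul, one_smul, sub_eq_sub_iff_add_eq_add]
      exact h3.symm
    have h5 : c ξ hξ = (Complex.I - 1)⁻¹ • ((ξ - 1) • cI) := by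
      rw [← h4, inv_smul_smul₀ hne1]
    have key : ξ • ((Complex.I - 1)⁻¹ • cI) - (Complex.I - 1)⁻¹ • cI = c ξ hξ := by
      rw [h5]
      module
    rw [key]
    exact hc ξ hξ
end

section
/- Let K be a convex body in ℂⁿ whose orthogonal projection onto every 1-dimensional complex subspace is a closed disk centered at the origin. Then ξ·K = K for every unit complex number ξ. -/
open scoped Pointwise InnerProductSpace

/-!
A closed convex set is the intersection of the real half-spaces containing it, and every real
continuous functional on a complex space is the real part of a complex one, which by Riesz is
`x ↦ ⟪u, x⟫`. Hence `K` is invariant under rotation by `ξ` as soon as every set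
`{⟪u, x⟫ | x ∈ K}` is; up to a nonzero factor this set is the coordinate of the projection of `K`
onto `ℂ ∙ u`, a centered disk.
-/

theorem IsClosed.mem_of_forall_strongDual_exists_apply_eq {𝕜 E : Type*} [RCLike 𝕜]
    [NormedAddCommGroup E] [NormedSpace ℝ E] [NormedSpace 𝕜 E] [IsScalarTower ℝ 𝕜 E]
    {K : Set E} (hclosed : IsClosed K) (hconv : Convex ℝ K) {p : E}
    (h : ∀ g : StrongDual 𝕜 E, ∃ y ∈ K, g y = g p) : p ∈ K := by
  by_contra hp
  obtain ⟨f, c, hfK, hfp⟩ := geometric_hahn_banach_closed_point hconv hclosed hp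
  obtain ⟨y, hy, hgy⟩ := h (f.extendRCLike (𝕜 := 𝕜))
  have hfy : f y = f p := by
    rw [← StrongDual.re_extendRCLike_apply (𝕜 := 𝕜) f y, hgy, StrongDual.re_extendRCLike_apply]
  linarith [hfK y hy]

theorem smul_set_eq_of_forall_norm_eq_one {α : Type*} [MulAction ℂ α] {K : Set α}
    (h : ∀ ξ : ℂ, ‖ξ‖ = 1 → ∀ x ∈ K, ξ • x ∈ K) {ξ : ℂ} (hξ : ‖ξ‖ = 1) : ξ • K = K := by
  have hξ0 : ξ ≠ 0 := norm_ne_zero_iff.mp (hξ ▸ one_ne_zero)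
  refine (Set.smul_set_subset_iff.mpr (h ξ hξ)).antisymm fun x hx => ?_
  rw [Set.mem_smul_set_iff_inv_smul_mem₀ hξ0]
  exact h ξ⁻¹ (by rw [norm_inv, hξ, inv_one]) x hx

section InnerProduct

variable {E : Type*} [NormedAddCommGroup E] [InnerProductSpace ℂ E]

theorem exists_mem_inner_eq_mul_of_starProjection_image_eq_disk {K : Set E}
    {L : Submodule ℂ E} [L.HasOrthogonalProjection] {v : E} (hL : L = ℂ ∙ v) (hv : ‖v‖ = 1)
    {r : ℝ} (hdisk : L.starProjection '' K = {x | ∃ z : ℂ, ‖z‖ ≤ r ∧ x = z • v})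
    {ξ : ℂ} (hξ : ‖ξ‖ = 1) {x : E} (hx : x ∈ K) : ∃ y ∈ K, ⟪v, y⟫_ℂ = ξ * ⟪v, x⟫_ℂ := by
  subst hL
  have hv0 : v ≠ 0 := norm_ne_zero_iff.mp (hv ▸ one_ne_zero)
  have hproj : ∀ w, (ℂ ∙ v).starProjection w = ⟪v, w⟫_ℂ • v :=
    Submodule.starProjection_unit_singleton ℂ hv
  obtain ⟨z, hz, hzv⟩ : ⟪v, x⟫_ℂ • v ∈ {x | ∃ z : ℂ, ‖z‖ ≤ r ∧ x = z • v} :=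
    hdisk ▸ ⟨x, hx, hproj x⟩
  have hξx : (ξ * ⟪v, x⟫_ℂ) • v ∈ (ℂ ∙ v).starProjection '' K := by
    rw [hdisk, smul_left_injective ℂ hv0 hzv]
    exact ⟨ξ * z, by rwa [norm_mul, hξ, one_mul], rfl⟩
  obtain ⟨y, hy, hyv⟩ := hξx
  exact ⟨y, hy, smul_left_injective ℂ hv0 ((hproj y).symm.trans hyv)⟩

variable [FiniteDimensional ℂ E]

theorem exists_mem_apply_eq_apply_smul_of_forall_starProjection_image_eq_disk {K : Set E}
    (hdisk : ∀ L : Submodule ℂ E, Module.finrank ℂ L = 1 →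
      ∃ v : E, v ∈ L ∧ ‖v‖ = 1 ∧ ∃ r : ℝ, 0 ≤ r ∧
        L.starProjection '' K = {x | ∃ z : ℂ, ‖z‖ ≤ r ∧ x = z • v})
    {ξ : ℂ} (hξ : ‖ξ‖ = 1) (g : StrongDual ℂ E) {x : E} (hx : x ∈ K) :
    ∃ y ∈ K, g y = g (ξ • x) := by
  set u := (InnerProductSpace.toDual ℂ E).symm g
  have hgu : ∀ y, g y = ⟪u, y⟫_ℂ := fun y => InnerProductSpace.toDual_symm_apply.symm
  by_cases hu : u = 0
  · exact ⟨x, hx, by simp [hgu, hu]⟩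
  obtain ⟨v, hvu, hv, r, -, himg⟩ := hdisk (ℂ ∙ u) (finrank_span_singleton hu)
  obtain ⟨a, rfl⟩ := Submodule.mem_span_singleton.mp hvu
  have ha : a ≠ 0 := by rintro rfl; simp at hv
  obtain ⟨y, hy, hyx⟩ := exists_mem_inner_eq_mul_of_starProjection_image_eq_disk
    (Submodule.span_singleton_smul_eq ha.isUnit u).symm hv himg hξ hx
  refine ⟨y, hy, ?_⟩
  rw [inner_smul_left, inner_smul_left] at hyx
  rw [hgu, hgu, inner_smul_right]
  exact mul_left_cancel₀ ((map_ne_zero _).mpr ha) (hyx.trans (mul_left_comm _ _ _))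

end InnerProduct

theorem stmt5 {n : ℕ} (K : Set (EuclideanSpace ℂ (Fin n))) (hK : IsConvexBody K)
    (hproj : ∀ L : Submodule ℂ (EuclideanSpace ℂ (Fin n)), Module.finrank ℂ L = 1 →
      ∃ v : EuclideanSpace ℂ (Fin n), v ∈ L ∧ ‖v‖ = 1 ∧ ∃ r : ℝ, 0 ≤ r ∧
        (fun x => (L.orthogonalProjection x : EuclideanSpace ℂ (Fin n))) '' K
          = {x | ∃ z : ℂ, ‖z‖ ≤ r ∧ x = z • v}) :
    ∀ ξ : ℂ, ‖ξ‖ = 1 → ξ • K = K :=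
  fun _ => smul_set_eq_of_forall_norm_eq_one fun _ hξ _ hx =>
    hK.1.isClosed.mem_of_forall_strongDual_exists_apply_eq hK.2.1 fun g =>
      exists_mem_apply_eq_apply_smul_of_forall_starProjection_image_eq_disk hproj hξ g hx
end

section
/- Let K be a convex body in ℂⁿ, n ≥ 3, such that the orthogonal projection of K onto every (n−1)-dimensional complex subspace is complex-symmetric. Then K is complex-symmetric. -/
/-! If the projection of `K` onto each complex hyperplane `V` is circled about `c V`, then for
`u ∈ V ∩ W` the projection of `K` onto the line `ℂ ∙ u` is circled about the projections of both
`c V` and `c W`; the center of a bounded circled set is unique, so `⟪c V, u⟫ = ⟪c W, u⟫`. Since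
`n ≥ 3`, any two vectors lie in a common hyperplane, hence `u ↦ ⟪c V, u⟫` for any `V ∋ u` is a
well-defined linear functional, represented by a vector `c₀` with `P_V c₀ = P_V (c V)` for all `V`.
Finally, for `x ∈ K` and `|ξ| = 1`, every functional `⟪w, ·⟫` takes at `c₀ + ξ (x - c₀)` a value
it takes on `K` (project onto a hyperplane containing `w`), so this point lies in `K` by
Hahn–Banach. -/

open scoped Pointwise

def IsComplexSymmetric {n : ℕ} (A : Set (EuclideanSpace ℂ (Fin n))) : Prop :=
  ∃ c : EuclideanSpace ℂ (Fin n),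
    ∀ ξ : ℂ, ‖ξ‖ = 1 → ξ • ((· - c) '' A) = (· - c) '' A

open Bornology Module
open scoped InnerProductSpace

section Circled

variable {𝕜 E : Type*} [RCLike 𝕜]

variable (𝕜) in
def IsCircledAbout [AddCommGroup E] [Module 𝕜 E] (A : Set E) (c : E) : Prop :=
  ∀ ξ : 𝕜, ‖ξ‖ = 1 → ∀ x ∈ A, c + ξ • (x - c) ∈ A

theorem isCircledAbout_iff [AddCommGroup E] [Module 𝕜 E] {A : Set E} {c : E} :
    IsCircledAbout 𝕜 A c ↔ ∀ ξ : 𝕜, ‖ξ‖ = 1 → ξ • ((· - c) '' A) = (· - c) '' A := by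
  refine ⟨fun h ξ hξ => ?_, fun h ξ hξ x hx => ?_⟩
  · have hξ0 : ξ ≠ 0 := by rintro rfl; simp at hξ
    refine (Set.smul_set_subset_iff.2 ?_).antisymm fun z hz => ?_
    · rintro _ ⟨x, hx, rfl⟩
      exact ⟨_, h ξ hξ x hx, add_sub_cancel_left _ _⟩
    · obtain ⟨x, hx, rfl⟩ := hz
      refine ⟨_, ⟨_, h ξ⁻¹ (by rw [norm_inv, hξ, inv_one]) x hx, add_sub_cancel_left _ _⟩, ?_⟩
      simp only [smul_smul, mul_inv_cancel₀ hξ0, one_smul]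
  · obtain ⟨y, hy, hxy⟩ : ξ • (x - c) ∈ (· - c) '' A := by
      rw [← h ξ hξ]; exact Set.smul_mem_smul_set ⟨x, hx, rfl⟩
    rwa [← hxy, add_sub_cancel]

theorem IsCircledAbout.image [AddCommGroup E] [Module 𝕜 E] {F : Type*} [AddCommGroup F]
    [Module 𝕜 F] {A : Set E} {c : E} (h : IsCircledAbout 𝕜 A c) (f : E →ₗ[𝕜] F) :
    IsCircledAbout 𝕜 (f '' A) (f c) := by
  rintro ξ hξ y ⟨x, hx, rfl⟩
  exact ⟨_, h ξ hξ x hx, by simp⟩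

variable (𝕜) in
theorem Bornology.IsBounded.eq_zero_of_forall_add_mem [NormedAddCommGroup E] [NormedSpace 𝕜 E]
    {A : Set E} (hA : IsBounded A) {a d : E} (ha : a ∈ A) (hd : ∀ x ∈ A, x + d ∈ A) :
    d = 0 := by
  have hmem : ∀ k : ℕ, a + k • d ∈ A := fun k => by
    induction k with
    | zero => simpa using ha
    | succ k ih => simpa [succ_nsmul, add_assoc] using hd _ ih
  obtain ⟨M, hM⟩ := hA.exists_norm_le
  by_contra hd0
  obtain ⟨k, hk⟩ := exists_nat_gt ((M + ‖a‖) / ‖d‖)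
  rw [div_lt_iff₀ (norm_pos_iff.2 hd0)] at hk
  have : ‖k • d‖ ≤ M + ‖a‖ :=
    calc ‖k • d‖ = ‖(a + k • d) - a‖ := by rw [add_sub_cancel_left]
      _ ≤ ‖a + k • d‖ + ‖a‖ := norm_sub_le _ _
      _ ≤ M + ‖a‖ := by gcongr; exact hM _ (hmem k)
  rw [RCLike.norm_nsmul 𝕜, nsmul_eq_mul] at this
  linarith

-- Reflections through `c` and `c'` compose to the translation by `2 • (c' - c)`.
theorem IsCircledAbout.unique [NormedAddCommGroup E] [NormedSpace 𝕜 E] {A : Set E} {c c' : E}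
    (hA : IsBounded A) (hne : A.Nonempty) (h : IsCircledAbout 𝕜 A c)
    (h' : IsCircledAbout 𝕜 A c') : c = c' := by
  obtain ⟨a, ha⟩ := hne
  have hneg : ‖(-1 : 𝕜)‖ = 1 := by simp
  have htrans : ∀ x ∈ A, x + (2 : 𝕜) • (c' - c) ∈ A := fun x hx => by
    convert h' (-1) hneg _ (h (-1) hneg x hx) using 1
    module
  have := hA.eq_zero_of_forall_add_mem 𝕜 ha htrans
  rw [smul_eq_zero, sub_eq_zero] at this
  exact (this.resolve_left two_ne_zero).symm

end Circled

section Projection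

variable {𝕜 E : Type*} [RCLike 𝕜] [NormedAddCommGroup E] [InnerProductSpace 𝕜 E]

theorem Submodule.inner_starProjection_of_mem (V : Submodule 𝕜 E) [V.HasOrthogonalProjection]
    (x : E) {u : E} (hu : u ∈ V) : ⟪V.starProjection x, u⟫_𝕜 = ⟪x, u⟫_𝕜 := by
  rw [inner_starProjection_left_eq_right, starProjection_eq_self_iff.2 hu]

theorem Submodule.starProjection_eq_of_forall_inner_eq (V : Submodule 𝕜 E)
    [V.HasOrthogonalProjection] {a b : E} (h : ∀ u ∈ V, ⟪a, u⟫_𝕜 = ⟪b, u⟫_𝕜) :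
    V.starProjection a = V.starProjection b := by
  rw [← sub_eq_zero, ← map_sub, starProjection_apply_eq_zero_iff]
  intro u hu
  rw [inner_sub_right, ← inner_conj_symm, h u hu, inner_conj_symm, sub_self]

theorem IsCircledAbout.starProjection_of_le {K : Set E} {c : E} {U V : Submodule 𝕜 E}
    [U.HasOrthogonalProjection] [V.HasOrthogonalProjection] (hUV : U ≤ V)
    (h : IsCircledAbout 𝕜 (V.starProjection '' K) c) :
    IsCircledAbout 𝕜 (U.starProjection '' K) (U.starProjection c) := by
  have hUV' : ∀ x, U.starProjection (V.starProjection x) = U.starProjection x :=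
    DFunLike.congr_fun (Submodule.starProjection_comp_starProjection_of_le hUV)
  simpa only [ContinuousLinearMap.coe_coe, Set.image_image, hUV'] using
    h.image (U.starProjection : E →ₗ[𝕜] E)

theorem IsCircledAbout.inner_eq_of_starProjection {K : Set E} (hK : IsBounded K)
    (hne : K.Nonempty) {V W : Submodule 𝕜 E} [V.HasOrthogonalProjection]
    [W.HasOrthogonalProjection] {a b : E} (hV : IsCircledAbout 𝕜 (V.starProjection '' K) a)
    (hW : IsCircledAbout 𝕜 (W.starProjection '' K) b) {u : E} (huV : u ∈ V) (huW : u ∈ W) :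
    ⟪a, u⟫_𝕜 = ⟪b, u⟫_𝕜 := by
  let L := 𝕜 ∙ u
  have huL : u ∈ L := Submodule.mem_span_singleton_self u
  have hL : L.starProjection a = L.starProjection b :=
    (hV.starProjection_of_le ((Submodule.span_singleton_le_iff_mem u V).2 huV)).unique
      (L.starProjection.lipschitz.isBounded_image hK) (hne.image _)
      (hW.starProjection_of_le ((Submodule.span_singleton_le_iff_mem u W).2 huW))
  rw [← L.inner_starProjection_of_mem a huL, hL, L.inner_starProjection_of_mem b huL]

theorem Submodule.exists_finrank_eq_sub_one_mem_mem [FiniteDimensional 𝕜 E]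
    (hE : 2 < finrank 𝕜 E) (u v : E) :
    ∃ V : Submodule 𝕜 E, finrank 𝕜 V = finrank 𝕜 E - 1 ∧ u ∈ V ∧ v ∈ V := by
  let W := span 𝕜 (Set.range ![u, v])
  have hW : finrank 𝕜 W ≤ 2 := (finrank_range_le_card _).trans_eq (Fintype.card_fin 2)
  have hWperp : Wᗮ ≠ ⊥ := by
    intro h
    have := W.finrank_add_finrank_orthogonal
    rw [h, finrank_bot] at this
    omega
  obtain ⟨t, htW, ht⟩ := exists_mem_ne_zero_of_ne_bot hWperp
  have hWt : W ≤ (𝕜 ∙ t)ᗮ :=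
    W.le_orthogonal_orthogonal.trans (orthogonal_le ((span_singleton_le_iff_mem t _).2 htW))
  refine ⟨(𝕜 ∙ t)ᗮ, ?_, hWt (subset_span ⟨0, rfl⟩), hWt (subset_span ⟨1, rfl⟩)⟩
  have := (𝕜 ∙ t).finrank_add_finrank_orthogonal
  rw [finrank_span_singleton ht] at this
  omega

theorem exists_forall_inner_eq_of_compatible [FiniteDimensional 𝕜 E] (hE : 2 < finrank 𝕜 E)
    (c : Submodule 𝕜 E → E)
    (hc : ∀ V W : Submodule 𝕜 E, finrank 𝕜 V = finrank 𝕜 E - 1 →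
      finrank 𝕜 W = finrank 𝕜 E - 1 → ∀ u ∈ V, u ∈ W → ⟪c V, u⟫_𝕜 = ⟪c W, u⟫_𝕜) :
    ∃ c₀ : E, ∀ V : Submodule 𝕜 E, finrank 𝕜 V = finrank 𝕜 E - 1 →
      ∀ u ∈ V, ⟪c₀, u⟫_𝕜 = ⟪c V, u⟫_𝕜 := by
  have := FiniteDimensional.complete 𝕜 E
  choose H hH huH hvH using Submodule.exists_finrank_eq_sub_one_mem_mem hE
  have key : ∀ V : Submodule 𝕜 E, finrank 𝕜 V = finrank 𝕜 E - 1 → ∀ u ∈ V,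
      ⟪c (H u u), u⟫_𝕜 = ⟪c V, u⟫_𝕜 := fun V hV u hu => hc _ _ (hH u u) hV u (huH u u) hu
  let φ : E →ₗ[𝕜] 𝕜 :=
    { toFun := fun u => ⟪c (H u u), u⟫_𝕜
      map_add' := fun u v => by
        simp only [key (H u v) (hH u v) _ (add_mem (huH u v) (hvH u v)),
          key (H u v) (hH u v) u (huH u v), key (H u v) (hH u v) v (hvH u v), inner_add_right]
      map_smul' := fun a u => by
        simp only [key (H u u) (hH u u) _ (Submodule.smul_mem _ a (huH u u)), inner_smul_right,
          RingHom.id_apply, smul_eq_mul] }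
  refine ⟨(InnerProductSpace.toDual 𝕜 E).symm (LinearMap.toContinuousLinearMap φ),
    fun V hV u hu => ?_⟩
  rw [InnerProductSpace.toDual_symm_apply]
  exact key V hV u hu

-- Every real functional is the real part of some `⟪w, ·⟫_𝕜`.
variable (𝕜) in
theorem mem_of_forall_exists_inner_eq [NormedSpace ℝ E] [IsScalarTower ℝ 𝕜 E]
    [CompleteSpace E] {K : Set E} (hconv : Convex ℝ K) (hclosed : IsClosed K) {y : E}
    (h : ∀ w : E, ∃ x ∈ K, ⟪w, x⟫_𝕜 = ⟪w, y⟫_𝕜) : y ∈ K := by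
  rw [← iInter_halfSpaces_eq hconv hclosed, Set.mem_iInter]
  intro l
  obtain ⟨x, hx, hxy⟩ := h ((InnerProductSpace.toDual 𝕜 E).symm (l.extendRCLike))
  simp only [InnerProductSpace.toDual_symm_apply] at hxy
  refine ⟨x, hx, le_of_eq ?_⟩
  simpa only [StrongDual.re_extendRCLike_apply] using congrArg RCLike.re hxy.symm

theorem isCircledAbout_of_forall_starProjection [FiniteDimensional 𝕜 E] [NormedSpace ℝ E]
    [IsScalarTower ℝ 𝕜 E] {K : Set E} (hconv : Convex ℝ K) (hclosed : IsClosed K) {c : E}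
    (h : ∀ w : E, ∃ V : Submodule 𝕜 E, w ∈ V ∧
      IsCircledAbout 𝕜 (V.starProjection '' K) (V.starProjection c)) :
    IsCircledAbout 𝕜 K c := by
  have := FiniteDimensional.complete 𝕜 E
  intro ξ hξ x hx
  refine mem_of_forall_exists_inner_eq 𝕜 hconv hclosed fun w => ?_
  obtain ⟨V, hwV, hV⟩ := h w
  obtain ⟨x', hx', hx'x⟩ := hV ξ hξ _ ⟨x, hx, rfl⟩
  refine ⟨x', hx', ?_⟩
  rw [← V.starProjection_eq_self_iff.2 hwV, V.inner_starProjection_left_eq_right,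
    V.inner_starProjection_left_eq_right, hx'x]
  simp

end Projection

theorem isComplexSymmetric_iff {n : ℕ} {A : Set (EuclideanSpace ℂ (Fin n))} :
    IsComplexSymmetric A ↔ ∃ c, IsCircledAbout ℂ A c :=
  exists_congr fun _ => isCircledAbout_iff.symm

theorem stmt9 {n : ℕ} (hn : 3 ≤ n)
    (K : Set (EuclideanSpace ℂ (Fin n))) (hK : IsConvexBody K)
    (hproj : ∀ V : Submodule ℂ (EuclideanSpace ℂ (Fin n)),
      Module.finrank ℂ V = n - 1 →
      IsComplexSymmetric
        ((fun x => (V.orthogonalProjection x : EuclideanSpace ℂ (Fin n))) '' K)) :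
    IsComplexSymmetric K := by
  obtain ⟨hKcpt, hKconv, hKint⟩ := hK
  have hE : finrank ℂ (EuclideanSpace ℂ (Fin n)) = n := finrank_euclideanSpace_fin
  have hE2 : 2 < finrank ℂ (EuclideanSpace ℂ (Fin n)) := by omega
  have hsym : ∀ V : Submodule ℂ (EuclideanSpace ℂ (Fin n)),
      finrank ℂ V = finrank ℂ (EuclideanSpace ℂ (Fin n)) - 1 →
      ∃ c, IsCircledAbout ℂ (V.starProjection '' K) c :=
    fun V hV => isComplexSymmetric_iff.1 (hproj V (by rw [hV, hE]))
  choose! c hc using hsym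
  obtain ⟨c₀, hc₀⟩ := exists_forall_inner_eq_of_compatible hE2 c fun V W hV hW u huV huW =>
    (hc V hV).inner_eq_of_starProjection hKcpt.isBounded (hKint.mono interior_subset)
      (hc W hW) huV huW
  refine isComplexSymmetric_iff.2
    ⟨c₀, isCircledAbout_of_forall_starProjection hKconv hKcpt.isClosed fun w => ?_⟩
  obtain ⟨V, hV, hwV, -⟩ := Submodule.exists_finrank_eq_sub_one_mem_mem hE2 w w
  refine ⟨V, hwV, ?_⟩
  rw [V.starProjection_eq_of_forall_inner_eq (hc₀ V hV)]
  exact (hc V hV).starProjection_of_le le_rfl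
end

section
/- Every complex ellipsoid in ℂⁿ is a bombon: for every complex line L, the intersection L ∩ E is either empty, a single point, or a (possibly degenerate) closed disk. -/
/-!
Pulling back by the affine map, the points `p + z • v` of the ellipsoid correspond to the
`z : ℂ` with `‖a + z • w‖ ≤ 1`. If `z₀` is the foot of the perpendicular from `-a` to the line
`ℂ • w`, Pythagoras gives `‖a + z • w‖² = ‖a + z₀ • w‖² + (|z - z₀| ‖w‖)²`, so this set of `z`
is empty or a closed disk around `z₀`.
-/

open scoped InnerProductSpace

/-- Every complex line meets `K` in the empty set, a single point,
or a (possibly degenerate) closed disk. -/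
def IsBombon {n : ℕ} (K : Set (EuclideanSpace ℂ (Fin n))) : Prop :=
  ∀ p v : EuclideanSpace ℂ (Fin n), v ≠ 0 →
    {x | ∃ z : ℂ, x = p + z • v} ∩ K = ∅ ∨
    (∃ x : EuclideanSpace ℂ (Fin n), {x' | ∃ z : ℂ, x' = p + z • v} ∩ K = {x}) ∨
    (∃ (c : EuclideanSpace ℂ (Fin n)) (r : ℝ), 0 ≤ r ∧ (∃ z : ℂ, c = p + z • v) ∧
      {x | ∃ z : ℂ, x = p + z • v} ∩ K = {x | ∃ z : ℂ, ‖z‖ ≤ r ∧ x = c + z • v})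

section LineMeetsBall

variable {𝕜 E : Type*} [RCLike 𝕜] [NormedAddCommGroup E] [InnerProductSpace 𝕜 E]

theorem exists_norm_add_smul_sq_eq {a w : E} (hw : w ≠ 0) :
    ∃ z₀ : 𝕜, ∀ z : 𝕜, ‖a + z • w‖ ^ 2 = ‖a + z₀ • w‖ ^ 2 + (‖z - z₀‖ * ‖w‖) ^ 2 := by
  have hw2 : (‖w‖ : 𝕜) ^ 2 ≠ 0 := by simpa using hw
  set z₀ : 𝕜 := -(⟪w, a⟫_𝕜 / (‖w‖ : 𝕜) ^ 2)
  have hfoot : ⟪w, a + z₀ • w⟫_𝕜 = 0 := by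
    rw [inner_add_right, inner_smul_right, inner_self_eq_norm_sq_to_K, neg_mul,
      div_mul_cancel₀ _ hw2, add_neg_cancel]
  refine ⟨z₀, fun z => ?_⟩
  have horth : ⟪a + z₀ • w, (z - z₀) • w⟫_𝕜 = 0 := by
    rw [inner_smul_right, inner_eq_zero_symm.mp hfoot, mul_zero]
  have hsplit : a + z • w = (a + z₀ • w) + (z - z₀) • w := by module
  rw [hsplit, sq, norm_add_sq_eq_norm_sq_add_norm_sq_of_inner_eq_zero _ _ horth, norm_smul]
  ring

theorem setOf_norm_add_smul_le_eq_empty_or_closedBall {a w : E} (hw : w ≠ 0) (R : ℝ) :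
    {z : 𝕜 | ‖a + z • w‖ ≤ R} = ∅ ∨
      ∃ z₀ r, 0 ≤ r ∧ {z : 𝕜 | ‖a + z • w‖ ≤ R} = Metric.closedBall z₀ r := by
  obtain ⟨z₀, hpyth⟩ := exists_norm_add_smul_sq_eq (𝕜 := 𝕜) (a := a) hw
  set m := ‖a + z₀ • w‖
  rcases lt_or_ge R m with hRm | hmR
  · refine Or.inl (Set.eq_empty_of_forall_notMem fun z (hz : ‖a + z • w‖ ≤ R) => ?_)
    have hm_le : m ^ 2 ≤ ‖a + z • w‖ ^ 2 := by rw [hpyth z]; nlinarith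
    nlinarith [norm_nonneg (a + z • w), norm_nonneg (a + z₀ • w)]
  · have hR : 0 ≤ R := (norm_nonneg _).trans hmR
    have hwpos : 0 < ‖w‖ := norm_pos_iff.mpr hw
    refine Or.inr ⟨z₀, √(R ^ 2 - m ^ 2) / ‖w‖, by positivity, Set.ext fun z => ?_⟩
    rw [Set.mem_ofPred_eq, Metric.mem_closedBall, dist_eq_norm, le_div_iff₀ hwpos,
      Real.le_sqrt (by positivity) (by nlinarith [norm_nonneg (a + z₀ • w)]),
      ← sq_le_sq₀ (norm_nonneg _) hR, hpyth z]
    constructor <;> intro h <;> linarith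

end LineMeetsBall

theorem isBombon_of_forall_setOf_mem_eq_empty_or_closedBall {n : ℕ}
    {K : Set (EuclideanSpace ℂ (Fin n))}
    (h : ∀ p v : EuclideanSpace ℂ (Fin n), v ≠ 0 → {z : ℂ | p + z • v ∈ K} = ∅ ∨
      ∃ z₀ r, 0 ≤ r ∧ {z : ℂ | p + z • v ∈ K} = Metric.closedBall z₀ r) :
    IsBombon K := by
  intro p v hv
  rcases h p v hv with hempty | ⟨z₀, r, hr, hball⟩
  · refine Or.inl (Set.eq_empty_of_forall_notMem ?_)
    rintro _ ⟨⟨z, rfl⟩, hz⟩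
    exact (Set.eq_empty_iff_forall_notMem.mp hempty) z hz
  · refine Or.inr (Or.inr ⟨p + z₀ • v, r, hr, ⟨z₀, rfl⟩, Set.ext fun x => ⟨?_, ?_⟩⟩)
    · rintro ⟨⟨z, rfl⟩, hz⟩
      have hz' : z ∈ Metric.closedBall z₀ r := hball ▸ hz
      exact ⟨z - z₀, by rwa [Metric.mem_closedBall, dist_eq_norm] at hz', by module⟩
    · rintro ⟨z, hz, rfl⟩
      have hz' : z₀ + z ∈ Metric.closedBall z₀ r := by
        rwa [Metric.mem_closedBall, dist_eq_norm, add_sub_cancel_left]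
      rw [← hball, Set.mem_ofPred_eq, add_smul, ← add_assoc] at hz'
      exact ⟨⟨z₀ + z, by module⟩, hz'⟩

theorem mem_image_linearEquiv_add_closedBall_zero_iff {𝕜 E F : Type*} [RCLike 𝕜]
    [NormedAddCommGroup E] [NormedSpace 𝕜 E] [NormedAddCommGroup F] [Module 𝕜 F]
    (L : E ≃ₗ[𝕜] F) (b x : F) (R : ℝ) :
    x ∈ (fun y => L y + b) '' Metric.closedBall 0 R ↔ ‖L.symm (x - b)‖ ≤ R := by
  constructor
  · rintro ⟨y, hy, rfl⟩
    simpa using hy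
  · exact fun h => ⟨L.symm (x - b), mem_closedBall_zero_iff.mpr h, by simp⟩

theorem stmt10 {n : ℕ}
    (L : EuclideanSpace ℂ (Fin n) ≃ₗ[ℂ] EuclideanSpace ℂ (Fin n))
    (b : EuclideanSpace ℂ (Fin n)) :
    IsBombon ((fun x => L x + b) '' Metric.closedBall 0 1) := by
  refine isBombon_of_forall_setOf_mem_eq_empty_or_closedBall fun p v hv => ?_
  have hpullback : {z : ℂ | p + z • v ∈ (fun x => L x + b) '' Metric.closedBall 0 1} =
      {z : ℂ | ‖L.symm (p - b) + z • L.symm v‖ ≤ 1} := by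
    ext z
    rw [Set.mem_ofPred_eq, mem_image_linearEquiv_add_closedBall_zero_iff, add_sub_right_comm,
      map_add, map_smul, Set.mem_ofPred_eq]
  rw [hpullback]
  exact setOf_norm_add_smul_le_eq_empty_or_closedBall (L.symm.map_ne_zero_iff.mpr hv) 1
end

section
/- Let K be a convex body in ℂⁿ with 2 ≤ k < n, and suppose every k-dimensional complex affine section of K through a fixed point p₀ ∈ int K is a complex ellipsoid (of dimension k). Then K is a complex ellipsoid. -/
def IsComplexEllipsoid {n : ℕ} (K : Set (EuclideanSpace ℂ (Fin n))) : Prop :=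
  ∃ (L : EuclideanSpace ℂ (Fin n) ≃ₗ[ℂ] EuclideanSpace ℂ (Fin n))
    (b : EuclideanSpace ℂ (Fin n)),
    K = (fun x => L x + b) '' Metric.closedBall 0 1

/-- `A` is a `k`-dimensional complex ellipsoid: the image of the closed unit
ball of ℂᵏ under an injective ℂ-affine map. -/
def IsEllipsoidOfDim {n : ℕ} (k : ℕ) (A : Set (EuclideanSpace ℂ (Fin n))) : Prop :=
  ∃ (f : EuclideanSpace ℂ (Fin k) →ₗ[ℂ] EuclideanSpace ℂ (Fin n))
    (b : EuclideanSpace ℂ (Fin n)), Function.Injective f ∧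
    A = (fun x => f x + b) '' Metric.closedBall 0 1

/-!
Every complex line `p₀ + ℂ x` meets `K` in a set `{t | a |t|² - 2 Re (t s) ≤ 1}`, a disc or ℂ, which
determines `(a, s) =: (Q x, S x)`. Any two directions lie in a `k`-dimensional section, where `K`
is an affine image `{g y + p₀ | ‖y - c‖ ≤ 1}` with `‖c‖ < 1` (since `p₀` is interior); there
`Q (g y) = ‖y‖² / (1 - ‖c‖²)` and `S (g y) = ⟪c, y⟫ / (1 - ‖c‖²)`. Hence `√Q` is a norm obeying
the parallelogram law, so `Q = ‖T ·‖²` for a linear isomorphism `T`, and `S` is linear, so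
`S = ⟪w, T ·⟫`. Completing the square, `K - p₀ = {x | ‖T x - w‖² ≤ 1 + ‖w‖²}`.
-/

open Module Metric
open scoped ComplexInnerProductSpace ComplexConjugate

theorem Submodule.exists_le_finrank_eq {K V : Type*} [DivisionRing K] [AddCommGroup V]
    [Module K V] [FiniteDimensional K V] (W : Submodule K V) {m : ℕ}
    (hWm : finrank K W ≤ m) (hm : m ≤ finrank K V) :
    ∃ U : Submodule K V, W ≤ U ∧ finrank K U = m := by
  obtain ⟨d, rfl⟩ := Nat.exists_eq_add_of_le hWm
  induction d generalizing W with
  | zero => exact ⟨W, le_rfl, rfl⟩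
  | succ d ih =>
    have hW : W < ⊤ := lt_top_iff_ne_top.2 fun hW => by
      rw [hW, finrank_top] at hm; omega
    obtain ⟨v, -, hv⟩ := SetLike.exists_of_lt hW
    obtain ⟨U, hU, hUd⟩ := ih (W ⊔ span K {v}) (by rw [finrank_sup_span_singleton hv]; omega)
      (by rw [finrank_sup_span_singleton hv]; omega)
    exact ⟨U, le_sup_left.trans hU, by rw [hUd, finrank_sup_span_singleton hv]; omega⟩

theorem Submodule.exists_pair_mem_finrank_eq {K V : Type*} [DivisionRing K] [AddCommGroup V]
    [Module K V] [FiniteDimensional K V] (u v : V) {m : ℕ} (h2m : 2 ≤ m) (hm : m ≤ finrank K V) :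
    ∃ U : Submodule K V, u ∈ U ∧ v ∈ U ∧ finrank K U = m := by
  classical
  have h : finrank K (span K {u, v}) ≤ 2 := by
    have := finrank_span_finset_le_card (R := K) ({u, v} : Finset V)
    rw [Finset.coe_insert, Finset.coe_singleton] at this
    exact this.trans Finset.card_le_two
  obtain ⟨U, hU, hUm⟩ := (span K {u, v}).exists_le_finrank_eq (h.trans h2m) hm
  exact ⟨U, hU (subset_span (by simp)), hU (subset_span (by simp)), hUm⟩

theorem AddGroupNorm.exists_linearEquiv_euclideanSpace {E : Type*} [AddCommGroup E] [Module ℂ E]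
    [FiniteDimensional ℂ E] {n : ℕ} (hn : finrank ℂ E = n) (N : AddGroupNorm E)
    (hsmul : ∀ (a : ℂ) (x : E), N (a • x) = ‖a‖ * N x)
    (hpar : ∀ x y : E,
      N (x + y) * N (x + y) + N (x - y) * N (x - y) = 2 * (N x * N x + N y * N y)) :
    ∃ T : E ≃ₗ[ℂ] EuclideanSpace ℂ (Fin n), ∀ x, N x = ‖T x‖ := by
  let _ : NormedAddCommGroup E := N.toNormedAddCommGroup
  let _ : NormedSpace ℂ E := ⟨fun a x => (hsmul a x).le⟩
  let _ : InnerProductSpace ℂ E := InnerProductSpace.ofNorm ℂ hpar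
  exact ⟨((stdOrthonormalBasis ℂ E).reindex (finCongr hn)).repr.toLinearEquiv,
    fun x => (LinearIsometryEquiv.norm_map _ x).symm⟩

theorem exists_linearEquiv_sq_norm_eq {E F : Type*} [AddCommGroup E] [Module ℂ E]
    [FiniteDimensional ℂ E] [NormedAddCommGroup F] [InnerProductSpace ℂ F] {n : ℕ}
    (hn : finrank ℂ E = n) (Q : E → ℝ)
    (hQ : ∀ u v : E, ∃ (g : F →ₗ[ℂ] E) (μ : ℝ), 0 < μ ∧ u ∈ LinearMap.range g ∧
      v ∈ LinearMap.range g ∧ ∀ y, Q (g y) = μ * ‖y‖ ^ 2) :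
    ∃ T : E ≃ₗ[ℂ] EuclideanSpace ℂ (Fin n), ∀ x, Q x = ‖T x‖ ^ 2 := by
  have hsqrt : ∀ u v : E, ∃ (g : F →ₗ[ℂ] E) (μ : ℝ) (y₁ y₂ : F), 0 < μ ∧ g y₁ = u ∧ g y₂ = v ∧
      ∀ y, √(Q (g y)) = √μ * ‖y‖ := fun u v => by
    obtain ⟨g, μ, hμ, ⟨y₁, rfl⟩, ⟨y₂, rfl⟩, hg⟩ := hQ u v
    exact ⟨g, μ, y₁, y₂, hμ, rfl, rfl, fun y => by
      rw [hg, Real.sqrt_mul hμ.le, Real.sqrt_sq (norm_nonneg y)]⟩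
  let N : AddGroupNorm E :=
    { toFun := fun x => √(Q x)
      map_zero' := by
        obtain ⟨g, μ, -, -, -, -, -, hg⟩ := hsqrt 0 0
        simpa using hg 0
      add_le' := fun u v => by
        obtain ⟨g, μ, y₁, y₂, -, rfl, rfl, hg⟩ := hsqrt u v
        rw [← map_add, hg, hg, hg, ← mul_add]
        gcongr
        exact norm_add_le _ _
      neg' := fun u => by
        obtain ⟨g, μ, y, -, -, rfl, -, hg⟩ := hsqrt u u
        rw [← map_neg, hg, hg, norm_neg]
      eq_zero_of_map_eq_zero' := fun u hu => by
        obtain ⟨g, μ, y, -, hμ, rfl, -, hg⟩ := hsqrt u u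
        rw [hg, mul_eq_zero, Real.sqrt_eq_zero hμ.le, norm_eq_zero] at hu
        rw [hu.resolve_left hμ.ne', map_zero] }
  obtain ⟨T, hT⟩ := N.exists_linearEquiv_euclideanSpace hn
    (fun a u => by
      obtain ⟨g, μ, y, -, -, rfl, -, hg⟩ := hsqrt u u
      change √(Q _) = _ * √(Q _)
      rw [← map_smul, hg, hg, norm_smul, mul_left_comm])
    (fun u v => by
      obtain ⟨g, μ, y₁, y₂, -, rfl, rfl, hg⟩ := hsqrt u v
      change √(Q _) * √(Q _) + √(Q _) * √(Q _) = 2 * (√(Q _) * √(Q _) + √(Q _) * √(Q _))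
      rw [← map_add, ← map_sub, hg, hg, hg, hg]
      linear_combination (√μ * √μ) * parallelogram_law_with_norm ℂ y₁ y₂)
  refine ⟨T, fun x => ?_⟩
  obtain ⟨g, μ, hμ, ⟨y, rfl⟩, -, hg⟩ := hQ x x
  rw [← hT, ← Real.sq_sqrt (hg y ▸ by positivity : 0 ≤ Q (g y))]
  rfl

theorem isComplexEllipsoid_of_forall_add_mem_iff {n : ℕ} {K : Set (EuclideanSpace ℂ (Fin n))}
    {p₀ : EuclideanSpace ℂ (Fin n)} (T : EuclideanSpace ℂ (Fin n) ≃ₗ[ℂ] EuclideanSpace ℂ (Fin n))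
    (φ : EuclideanSpace ℂ (Fin n) →ₗ[ℂ] ℂ)
    (hK : ∀ x, x + p₀ ∈ K ↔ ‖T x‖ ^ 2 - 2 * (φ x).re ≤ 1) : IsComplexEllipsoid K := by
  set w := (InnerProductSpace.toDual ℂ _).symm (φ ∘ₗ T.symm.toLinearMap).toContinuousLinearMap
  have hw : ∀ x, (φ x).re = RCLike.re ⟪T x, w⟫ := fun x => by
    rw [inner_re_symm (𝕜 := ℂ), InnerProductSpace.toDual_symm_apply]
    simp
  set ρ := √(1 + ‖w‖ ^ 2)
  have hρ : 0 < ρ := by positivity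
  have hρc : (ρ : ℂ) ≠ 0 := Complex.ofReal_ne_zero.2 hρ.ne'
  let L := (LinearEquiv.smulOfNeZero ℂ _ ρ hρc).trans T.symm
  refine ⟨L, T.symm w + p₀, ?_⟩
  rw [Set.image_eq_preimage_of_inverse (f := fun z => L z + _)
    (g := fun x => L.symm (x - (T.symm w + p₀))) (fun z => by simp) (fun x => by simp)]
  ext x
  have hL : L.symm (x - (T.symm w + p₀)) = (ρ : ℂ)⁻¹ • (T (x - p₀) - w) := by
    simp [L, Units.smul_def, sub_add_eq_sub_sub_swap]
  rw [Set.mem_preimage, hL, mem_closedBall_zero_iff, norm_smul, norm_inv, Complex.norm_real,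
    Real.norm_of_nonneg hρ.le, inv_mul_le_one₀ hρ, ← sq_le_sq₀ (norm_nonneg _) hρ.le,
    Real.sq_sqrt (by positivity), norm_sub_sq (𝕜 := ℂ), ← hw, add_le_add_iff_right, ← hK,
    sub_add_cancel]

theorem Metric.eq_and_eq_of_closedBall_eq {E : Type*} [NormedAddCommGroup E] [NormedSpace ℝ E]
    [Nontrivial E] {x y : E} {r s : ℝ} (hr : 0 < r) (h : closedBall x r = closedBall y s) :
    x = y ∧ r = s := by
  have hs : 0 ≤ s := nonempty_closedBall.1 (h ▸ nonempty_closedBall.2 hr.le)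
  have hrs : r = s := by
    have := (diam_closedBall_eq x hr.le).symm.trans (h ▸ diam_closedBall_eq y hs)
    linarith
  subst hrs
  refine ⟨by_contra fun hxy => ?_, rfl⟩
  have hd : 0 < ‖x - y‖ := norm_pos_iff.2 (sub_ne_zero.2 hxy)
  -- `p` lies on the ray from `y` through `x`, at distance `r` beyond `x`
  set p := x + (r / ‖x - y‖) • (x - y)
  have hp : p ∈ closedBall y r := h ▸ by
    simp [p, dist_eq_norm, norm_smul, abs_of_pos hr, hd.ne']
  have : dist p y = ‖x - y‖ + r := by
    rw [dist_eq_norm, show p - y = (1 + r / ‖x - y‖) • (x - y) by simp only [p]; module,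
      norm_smul, Real.norm_of_nonneg (by positivity)]
    field_simp
  rw [mem_closedBall, this] at hp
  linarith

def quadraticDisk (a : ℝ) (s : ℂ) : Set ℂ := {t | a * ‖t‖ ^ 2 - 2 * (t * s).re ≤ 1}

theorem quadraticDisk_zero : quadraticDisk 0 0 = Set.univ := by
  ext; simp [quadraticDisk]

theorem quadraticDisk_eq_closedBall {a : ℝ} (ha : 0 < a) (s : ℂ) :
    quadraticDisk a s = closedBall (conj s / a) √(‖conj s / a‖ ^ 2 + a⁻¹) := by
  ext t
  rw [mem_closedBall, dist_eq_norm, Real.le_sqrt (norm_nonneg _) (by positivity)]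
  have key : ‖t - conj s / a‖ ^ 2 - (‖conj s / a‖ ^ 2 + a⁻¹)
      = (a * ‖t‖ ^ 2 - 2 * (t * s).re - 1) / a := by
    simp only [Complex.sq_norm, Complex.normSq_apply, Complex.sub_re, Complex.sub_im,
      Complex.div_ofReal_re, Complex.div_ofReal_im, Complex.conj_re, Complex.conj_im,
      Complex.mul_re]
    field_simp
    ring
  rw [← sub_nonpos, key, div_le_iff₀ ha, zero_mul, sub_nonpos]
  rfl

/- `quadraticDisk 0 s` is a half-plane for `s ≠ 0`, hence the normalisation `a = 0 → s = 0`. -/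
theorem quadraticDisk_inj {a a' : ℝ} {s s' : ℂ} (ha : 0 ≤ a) (ha' : 0 ≤ a')
    (hs : a = 0 → s = 0) (hs' : a' = 0 → s' = 0) (h : quadraticDisk a s = quadraticDisk a' s') :
    a = a' ∧ s = s' := by
  have unbounded : ∀ {b : ℝ} (u : ℂ), 0 < b → quadraticDisk b u ≠ Set.univ := fun u hb hu =>
    NormedSpace.unbounded_univ ℂ ℂ (hu ▸ quadraticDisk_eq_closedBall hb u ▸ isBounded_closedBall)
  rcases ha.eq_or_lt with rfl | ha <;> rcases ha'.eq_or_lt with rfl | ha'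
  · exact ⟨rfl, (hs rfl).trans (hs' rfl).symm⟩
  · exact absurd (h.symm.trans (hs rfl ▸ quadraticDisk_zero)) (unbounded s' ha')
  · exact absurd (h.trans (hs' rfl ▸ quadraticDisk_zero)) (unbounded s ha)
  rw [quadraticDisk_eq_closedBall ha, quadraticDisk_eq_closedBall ha'] at h
  obtain ⟨hc, hr⟩ := eq_and_eq_of_closedBall_eq (Real.sqrt_pos.2 (by positivity)) h
  rw [hc, Real.sqrt_inj (by positivity) (by positivity), add_right_inj, inv_inj] at hr
  subst hr
  refine ⟨rfl, ?_⟩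
  exact (starRingEnd ℂ).injective ((div_left_inj' (Complex.ofReal_ne_zero.2 ha.ne')).1 hc)

theorem norm_smul_sub_le_one_iff {F : Type*} [NormedAddCommGroup F] [InnerProductSpace ℂ F]
    {c : F} (hc : ‖c‖ < 1) (y : F) (t : ℂ) :
    ‖t • y - c‖ ≤ 1 ↔
      t ∈ quadraticDisk ((1 - ‖c‖ ^ 2)⁻¹ * ‖y‖ ^ 2) ((1 - ‖c‖ ^ 2)⁻¹ • ⟪c, y⟫) := by
  have hγ : 0 < 1 - ‖c‖ ^ 2 := by nlinarith [norm_nonneg c]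
  have hre : RCLike.re ⟪t • y, c⟫ = (t * ⟪c, y⟫).re := by
    rw [inner_smul_left, ← inner_conj_symm y c, ← map_mul, RCLike.conj_re]
    rfl
  rw [← sq_le_one_iff₀ (norm_nonneg _), norm_sub_sq (𝕜 := ℂ), quadraticDisk, Set.mem_ofPred_eq,
    hre, norm_smul, mul_pow, mul_smul_comm, Complex.smul_re, smul_eq_mul,
    show ∀ a b : ℝ, (1 - ‖c‖ ^ 2)⁻¹ * a * b - 2 * ((1 - ‖c‖ ^ 2)⁻¹ * (t * ⟪c, y⟫).re)
      = (a * b - 2 * (t * ⟪c, y⟫).re) / (1 - ‖c‖ ^ 2) from fun _ _ => by ring, div_le_one hγ]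
  constructor <;> intro <;> linarith

def IsBallChart {E F : Type*} [AddCommGroup E] [Module ℂ E] [SeminormedAddCommGroup F]
    [Module ℂ F] (K : Set E) (p₀ : E) (g : F →ₗ[ℂ] E) (c : F) : Prop :=
  ‖c‖ < 1 ∧ ∀ y, g y + p₀ ∈ K ↔ ‖y - c‖ ≤ 1

theorem norm_lt_one_of_mem_interior {E F : Type*} [TopologicalSpace E] [NormedAddCommGroup F]
    [NormedSpace ℝ F] {K : Set E} {g : F → E} {c : F} (hg : Continuous g)
    (hK : ∀ y, g y ∈ K ↔ ‖y - c‖ ≤ 1) (h0 : g 0 ∈ interior K) : ‖c‖ < 1 := by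
  have hsub : g ⁻¹' interior K ⊆ closedBall c 1 := fun y hy => by
    simpa [dist_eq_norm] using (hK y).1 (interior_subset hy)
  have h0' : (0 : F) ∈ interior (closedBall c 1) :=
    interior_mono hsub ((isOpen_interior.preimage hg).interior_eq.symm ▸ h0)
  rcases eq_or_ne c 0 with rfl | hc
  · simp
  have : Nontrivial F := nontrivial_of_ne c 0 hc
  simpa [interior_closedBall _ one_ne_zero, dist_eq_norm] using h0'

theorem IsBallChart.setOf_smul_add_mem {E F : Type*} [AddCommGroup E] [Module ℂ E]
    [NormedAddCommGroup F] [InnerProductSpace ℂ F] {K : Set E} {p₀ : E} {g : F →ₗ[ℂ] E} {c : F}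
    (h : IsBallChart K p₀ g c) (y : F) :
    {t : ℂ | t • g y + p₀ ∈ K} =
      quadraticDisk ((1 - ‖c‖ ^ 2)⁻¹ * ‖y‖ ^ 2) ((1 - ‖c‖ ^ 2)⁻¹ • ⟪c, y⟫) := by
  ext t
  rw [Set.mem_ofPred_eq, ← map_smul, h.2, norm_smul_sub_le_one_iff h.1]

theorem IsEllipsoidOfDim.exists_isBallChart {n k : ℕ} {K : Set (EuclideanSpace ℂ (Fin n))}
    {p₀ : EuclideanSpace ℂ (Fin n)} (hp₀ : p₀ ∈ interior K)
    {V : Submodule ℂ (EuclideanSpace ℂ (Fin n))} (hV : finrank ℂ V = k)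
    (h : IsEllipsoidOfDim k ((· + p₀) '' (V : Set (EuclideanSpace ℂ (Fin n))) ∩ K)) :
    ∃ (g : EuclideanSpace ℂ (Fin k) →ₗ[ℂ] EuclideanSpace ℂ (Fin n))
      (c : EuclideanSpace ℂ (Fin k)), IsBallChart K p₀ g c ∧ V ≤ LinearMap.range g := by
  obtain ⟨f, b, hf, hS⟩ := h
  have hb : b - p₀ ∈ V := by
    obtain ⟨⟨v, hv, rfl⟩, -⟩ : b ∈ (· + p₀) '' (V : Set _) ∩ K := hS ▸ ⟨0, by simp, by simp⟩
    simpa using hv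
  have hball : closedBall 0 1 ⊆ (V.comap f : Set (EuclideanSpace ℂ (Fin k))) := fun y hy => by
    obtain ⟨⟨v, hv, hvy⟩, -⟩ : f y + b ∈ (· + p₀) '' (V : Set _) ∩ K := hS ▸ ⟨y, hy, rfl⟩
    have hfy : f y = v - (b - p₀) := by linear_combination (norm := module) -hvy
    show f y ∈ V
    exact hfy ▸ V.sub_mem hv hb
  have hrange : LinearMap.range f = V := by
    refine Submodule.eq_of_le_of_finrank_eq ?_ ?_
    · rw [LinearMap.range_le_iff_comap]
      exact Submodule.eq_top_of_nonempty_interior' _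
        ⟨0, interior_mono hball (mem_interior_iff_mem_nhds.2 (closedBall_mem_nhds 0 one_pos))⟩
    · rw [LinearMap.finrank_range_of_inj hf, finrank_euclideanSpace_fin, hV]
  obtain ⟨c, hc⟩ : b - p₀ ∈ LinearMap.range f := hrange ▸ hb
  have hmem : ∀ y, f y + p₀ ∈ K ↔ ‖y - c‖ ≤ 1 := by
    intro y
    have hK : f y + p₀ ∈ K ↔ f y + p₀ ∈ (fun x => f x + b) '' closedBall 0 1 :=
      hS ▸ ⟨fun h => ⟨⟨f y, hrange ▸ ⟨y, rfl⟩, rfl⟩, h⟩, And.right⟩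
    rw [hK, ← mem_closedBall_zero_iff]
    constructor
    · rintro ⟨z, hz, hzy⟩
      rwa [hf (show f z = f (y - c) by rw [map_sub, hc]; linear_combination (norm := module) hzy)]
        at hz
    · exact fun h => ⟨y - c, h, by simp only [map_sub, hc]; abel⟩
  have hc1 : ‖c‖ < 1 := norm_lt_one_of_mem_interior
    (f.continuous_of_finiteDimensional.add continuous_const) hmem (by simpa using hp₀)
  exact ⟨f, c, ⟨hc1, hmem⟩, hrange.ge⟩

theorem IsBallChart.inv_one_sub_sq_norm_pos {E F : Type*} [AddCommGroup E] [Module ℂ E]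
    [SeminormedAddCommGroup F] [Module ℂ F] {K : Set E} {p₀ : E} {g : F →ₗ[ℂ] E} {c : F}
    (h : IsBallChart K p₀ g c) : 0 < (1 - ‖c‖ ^ 2)⁻¹ :=
  inv_pos.2 (sub_pos.2 (pow_lt_one₀ (norm_nonneg _) h.1 two_ne_zero))

theorem exists_slice_coeffs {E F : Type*} [AddCommGroup E] [Module ℂ E] [NormedAddCommGroup F]
    [InnerProductSpace ℂ F] {K : Set E} {p₀ : E}
    (hK : ∀ x, ∃ (g : F →ₗ[ℂ] E) (c : F), IsBallChart K p₀ g c ∧ x ∈ LinearMap.range g) :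
    ∃ (Q : E → ℝ) (S : E → ℂ), (∀ x, {t : ℂ | t • x + p₀ ∈ K} = quadraticDisk (Q x) (S x)) ∧
      ∀ {g c}, IsBallChart K p₀ g c → ∀ y : F,
        Q (g y) = (1 - ‖c‖ ^ 2)⁻¹ * ‖y‖ ^ 2 ∧ S (g y) = (1 - ‖c‖ ^ 2)⁻¹ • ⟪c, y⟫ := by
  have hnormal : ∀ {g : F →ₗ[ℂ] E} {c : F}, IsBallChart K p₀ g c → ∀ y,
      0 ≤ (1 - ‖c‖ ^ 2)⁻¹ * ‖y‖ ^ 2 ∧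
        ((1 - ‖c‖ ^ 2)⁻¹ * ‖y‖ ^ 2 = 0 → (1 - ‖c‖ ^ 2)⁻¹ • ⟪c, y⟫ = 0) := fun hgc y => by
    have hμ := hgc.inv_one_sub_sq_norm_pos
    refine ⟨by positivity, fun ha => ?_⟩
    rw [mul_eq_zero, or_iff_right hμ.ne', pow_eq_zero_iff two_ne_zero, norm_eq_zero] at ha
    simp [ha]
  have hcoeff : ∀ x, ∃ (a : ℝ) (s : ℂ), 0 ≤ a ∧ (a = 0 → s = 0) ∧
      {t : ℂ | t • x + p₀ ∈ K} = quadraticDisk a s := fun x => by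
    obtain ⟨g, c, hgc, y, rfl⟩ := hK x
    exact ⟨_, _, (hnormal hgc y).1, (hnormal hgc y).2, hgc.setOf_smul_add_mem y⟩
  choose Q S hQ hS hQS using hcoeff
  exact ⟨Q, S, hQS, fun hgc y => quadraticDisk_inj (hQ _) (hnormal hgc y).1 (hS _)
    (hnormal hgc y).2 ((hQS _).symm.trans (hgc.setOf_smul_add_mem y))⟩

theorem isComplexEllipsoid_of_forall_isBallChart {n : ℕ} {F : Type*} [NormedAddCommGroup F]
    [InnerProductSpace ℂ F] {K : Set (EuclideanSpace ℂ (Fin n))} {p₀ : EuclideanSpace ℂ (Fin n)}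
    (hK : ∀ u v, ∃ (g : F →ₗ[ℂ] EuclideanSpace ℂ (Fin n)) (c : F),
      IsBallChart K p₀ g c ∧ u ∈ LinearMap.range g ∧ v ∈ LinearMap.range g) :
    IsComplexEllipsoid K := by
  obtain ⟨Q, S, hQS, hchart⟩ := exists_slice_coeffs fun x =>
    let ⟨g, c, hgc, hx, _⟩ := hK x x
    ⟨g, c, hgc, hx⟩
  obtain ⟨T, hT⟩ := exists_linearEquiv_sq_norm_eq finrank_euclideanSpace_fin Q fun u v => by
    obtain ⟨g, c, hgc, hu, hv⟩ := hK u v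
    exact ⟨g, _, hgc.inv_one_sub_sq_norm_pos, hu, hv, fun y => (hchart hgc y).1⟩
  let φ : EuclideanSpace ℂ (Fin n) →ₗ[ℂ] ℂ :=
    { toFun := S
      map_add' := fun u v => by
        obtain ⟨g, c, hgc, ⟨y₁, rfl⟩, ⟨y₂, rfl⟩⟩ := hK u v
        simp only [← map_add, (hchart hgc _).2, inner_add_right, smul_add]
      map_smul' := fun a u => by
        obtain ⟨g, c, hgc, ⟨y, rfl⟩, -⟩ := hK u u
        simp only [← map_smul, (hchart hgc _).2, inner_smul_right, RingHom.id_apply, smul_eq_mul,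
          mul_smul_comm] }
  refine isComplexEllipsoid_of_forall_add_mem_iff (p₀ := p₀) T φ fun x => ?_
  have hx : x + p₀ ∈ K ↔ (1 : ℂ) ∈ {t : ℂ | t • x + p₀ ∈ K} := by simp
  rw [hx, hQS, ← hT]
  simp [quadraticDisk, φ]

theorem stmt17_general {n k : ℕ} (hk : 2 ≤ k) (hkn : k < n)
    (K : Set (EuclideanSpace ℂ (Fin n)))
    (p₀ : EuclideanSpace ℂ (Fin n)) (hp₀ : p₀ ∈ interior K)
    (hsec : ∀ V : Submodule ℂ (EuclideanSpace ℂ (Fin n)), Module.finrank ℂ V = k →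
      IsEllipsoidOfDim k (((· + p₀) '' (V : Set (EuclideanSpace ℂ (Fin n)))) ∩ K)) :
    IsComplexEllipsoid K := by
  refine isComplexEllipsoid_of_forall_isBallChart (F := EuclideanSpace ℂ (Fin k)) (p₀ := p₀)
    fun u v => ?_
  obtain ⟨V, hu, hv, hV⟩ := Submodule.exists_pair_mem_finrank_eq (K := ℂ) u v hk
    (by rw [finrank_euclideanSpace_fin]; exact hkn.le)
  obtain ⟨g, c, hgc, hVg⟩ := (hsec V hV).exists_isBallChart hp₀ hV
  exact ⟨g, c, hgc, hVg hu, hVg hv⟩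

theorem stmt17 {n k : ℕ} (hk : 2 ≤ k) (hkn : k < n)
    (K : Set (EuclideanSpace ℂ (Fin n))) (hK : IsConvexBody K)
    (p₀ : EuclideanSpace ℂ (Fin n)) (hp₀ : p₀ ∈ interior K)
    (hsec : ∀ V : Submodule ℂ (EuclideanSpace ℂ (Fin n)), Module.finrank ℂ V = k →
      IsEllipsoidOfDim k (((· + p₀) '' (V : Set (EuclideanSpace ℂ (Fin n)))) ∩ K)) :
    IsComplexEllipsoid K :=
  stmt17_general hk hkn K p₀ hp₀ hsec
end
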